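/- arXiv:2403.12890 — 3 statements merged into one kernel-verified Lean document; each statement's English description precedes it below -/
import Mathlib

section
/- Let P, Q ⊆ ℝⁿ be convex polytopes such that P ∪ Q is convex. Then [P ∪ Q, o] = [P, o] ∪ [Q, o] and [P ∩ Q, o] = [P, o] ∩ [Q, o], where [A, o] denotes the convex hull of A and the origin. -/
/-! For convex nonempty `A`, the hull `[A, o]` is the union of the segments `[o, a]`, `a ∈ A`,
which gives the union formula at once. For the intersection, a point `x ≠ o` of `[o, p] ∩ [o, q]`
with `p ∈ P`, `q ∈ Q` puts `p` and `q` on one ray from `o`, say `q ∈ [o, p]`. The segment `[q, p]`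
is connected and lies in `P ∪ Q`, so it meets the closed set `P ∩ Q` at some `r`, and then
`x ∈ [o, q] ⊆ [o, r]`. -/

/-- A (nonempty, compact) convex polytope: the convex hull of a nonempty finite set. -/
def IsPolytope {n : ℕ} (P : Set (Fin n → ℝ)) : Prop :=
  ∃ S : Finset (Fin n → ℝ), S.Nonempty ∧ P = convexHull ℝ (S : Set (Fin n → ℝ))

open Set

namespace IsPolytope

variable {n : ℕ} {P : Set (Fin n → ℝ)}

lemma isClosed (hP : IsPolytope P) : IsClosed P := by
  obtain ⟨S, -, rfl⟩ := hP
  exact (S.finite_toSet.isCompact_convexHull ℝ).isClosed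

lemma convex (hP : IsPolytope P) : Convex ℝ P := by
  obtain ⟨S, -, rfl⟩ := hP
  exact convex_convexHull ℝ _

lemma nonempty (hP : IsPolytope P) : P.Nonempty := by
  obtain ⟨S, hS, rfl⟩ := hP
  exact hS.to_set.mono (subset_convexHull ℝ _)

end IsPolytope

lemma Wbtw.wbtw_or_wbtw_of_wbtw {R V P : Type*} [Field R] [LinearOrder R] [IsStrictOrderedRing R]
    [AddCommGroup V] [Module R V] [AddTorsor V P] {w x y z : P}
    (hy : Wbtw R w x y) (hz : Wbtw R w x z) (hx : x ≠ w) : Wbtw R w y z ∨ Wbtw R w z y :=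
  wbtw_total_of_sameRay_vsub_left <|
    hy.sameRay_vsub_left.symm.trans hz.sameRay_vsub_left fun h =>
      (hx (vsub_eq_zero_iff_eq.1 h)).elim

lemma Convex.convexHull_union_singleton {E : Type*} [AddCommGroup E] [Module ℝ E] {A : Set E}
    (hA : Convex ℝ A) (hne : A.Nonempty) (z : E) :
    convexHull ℝ (A ∪ {z}) = ⋃ a ∈ A, segment ℝ z a := by
  rw [union_singleton, convexHull_insert hne, hA.convexHull_eq, convexJoin_singleton_left]

section ClosedConvexUnion

variable {E : Type*} [AddCommGroup E] [Module ℝ E] [TopologicalSpace E] [IsTopologicalAddGroup E]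
  [ContinuousSMul ℝ E] {P Q : Set E}

lemma segment_inter_inter_nonempty_of_convex_union (hP : IsClosed P) (hQ : IsClosed Q)
    (hU : Convex ℝ (P ∪ Q)) {p q : E} (hp : p ∈ P) (hq : q ∈ Q) :
    (segment ℝ q p ∩ (P ∩ Q)).Nonempty :=
  isPreconnected_closed_iff.1 (convex_segment q p).isPreconnected P Q hP hQ
    (hU.segment_subset (Or.inr hq) (Or.inl hp))
    ⟨p, right_mem_segment ℝ q p, hp⟩ ⟨q, left_mem_segment ℝ q p, hq⟩

lemma exists_mem_inter_wbtw_of_convex_union (hP : IsClosed P) (hQ : IsClosed Q)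
    (hU : Convex ℝ (P ∪ Q)) {p q z : E} (hp : p ∈ P) (hq : q ∈ Q) (hzqp : Wbtw ℝ z q p) :
    ∃ r ∈ P ∩ Q, Wbtw ℝ z q r := by
  obtain ⟨r, hr, hrPQ⟩ := segment_inter_inter_nonempty_of_convex_union hP hQ hU hp hq
  exact ⟨r, hrPQ, hzqp.trans_right_left (mem_segment_iff_wbtw.1 hr)⟩

lemma exists_mem_inter_wbtw_of_wbtw_of_wbtw (hP : IsClosed P) (hQ : IsClosed Q)
    (hU : Convex ℝ (P ∪ Q)) {p q x z : E} (hp : p ∈ P) (hq : q ∈ Q)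
    (hxp : Wbtw ℝ z x p) (hxq : Wbtw ℝ z x q) :
    ∃ r ∈ P ∩ Q, Wbtw ℝ z x r := by
  by_cases hxz : x = z
  · obtain ⟨r, -, hr⟩ := segment_inter_inter_nonempty_of_convex_union hP hQ hU hp hq
    exact ⟨r, hr, hxz ▸ wbtw_self_left ℝ x r⟩
  rcases hxp.wbtw_or_wbtw_of_wbtw hxq hxz with hpq | hqp
  · obtain ⟨r, hr, hpr⟩ :=
      exists_mem_inter_wbtw_of_convex_union hQ hP (union_comm P Q ▸ hU) hq hp hpq
    exact ⟨r, hr.symm, hpr.trans_left hxp⟩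
  · obtain ⟨r, hr, hqr⟩ := exists_mem_inter_wbtw_of_convex_union hP hQ hU hp hq hqp
    exact ⟨r, hr, hqr.trans_left hxq⟩

end ClosedConvexUnion

/-- For polytopes `P, Q` with `P ∪ Q` convex: `[P ∪ Q, o] = [P, o] ∪ [Q, o]` and
`[P ∩ Q, o] = [P, o] ∩ [Q, o]`, where `[A, o]` is the convex hull of `A` and the origin. -/
theorem convexHull_origin_union_inter {n : ℕ} (P Q : Set (Fin n → ℝ))
    (hP : IsPolytope P) (hQ : IsPolytope Q) (hU : Convex ℝ (P ∪ Q)) :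
    convexHull ℝ ((P ∪ Q) ∪ {0}) = convexHull ℝ (P ∪ {0}) ∪ convexHull ℝ (Q ∪ {0}) ∧
    convexHull ℝ ((P ∩ Q) ∪ {0}) = convexHull ℝ (P ∪ {0}) ∩ convexHull ℝ (Q ∪ {0}) := by
  obtain ⟨p₀, hp₀⟩ := hP.nonempty
  obtain ⟨q₀, hq₀⟩ := hQ.nonempty
  have hPQ : (P ∩ Q).Nonempty :=
    (segment_inter_inter_nonempty_of_convex_union hP.isClosed hQ.isClosed hU hp₀ hq₀).mono
      inter_subset_right
  rw [hU.convexHull_union_singleton ⟨p₀, Or.inl hp₀⟩,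
    hP.convex.convexHull_union_singleton ⟨p₀, hp₀⟩, hQ.convex.convexHull_union_singleton ⟨q₀, hq₀⟩,
    (hP.convex.inter hQ.convex).convexHull_union_singleton hPQ]
  refine ⟨biUnion_union P Q _, Subset.antisymm ?_ ?_⟩
  · exact subset_inter (biUnion_mono inter_subset_left fun _ _ => subset_rfl)
      (biUnion_mono inter_subset_right fun _ _ => subset_rfl)
  · rintro x ⟨hxP, hxQ⟩
    simp only [mem_iUnion, mem_segment_iff_wbtw, exists_prop] at hxP hxQ ⊢
    obtain ⟨p, hp, hxp⟩ := hxP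
    obtain ⟨q, hq, hxq⟩ := hxQ
    exact exists_mem_inter_wbtw_of_wbtw_of_wbtw hP.isClosed hQ.isClosed hU hp hq hxp hxq
end

section
/- Let n ≥ 2, 0 < λ < 1, and Tⁿ = [o, e₁, ..., e_n] the standard n-simplex. Define φ₃ ∈ SL(n) by φ₃e₁ = λ^{-1/n}(λe₁ + (1-λ)e₂), φ₃e_i = λ^{-1/n}e_i for i ≥ 2, and φ₄ ∈ SL(n) by φ₄e₂ = (1-λ)^{-1/n}(λe₁ + (1-λ)e₂), φ₄e_i = (1-λ)^{-1/n}e_i for i ≠ 2. Then for every s > 0: sTⁿ ∩ H_λ⁻ = φ₃(λ^{1/n}sTⁿ), sTⁿ ∩ H_λ⁺ = φ₄((1-λ)^{1/n}sTⁿ), and sTⁿ ∩ H_λ = φ₃(λ^{1/n}sT̂^{n-1}), where H_λ is the hyperplane {x : x·((1-λ)e₁ - λe₂) = 0} with corresponding halfspaces, and T̂^{n-1} = [o, e₁, e₃, ..., e_n]. -/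
open Pointwise

/-- The standard simplex `T^d = [o, e₁, …, e_d]` in `ℝⁿ` (indices `0,…,d-1` stand for
`e₁,…,e_d`). -/
def stdSimplex' (n d : ℕ) : Set (Fin n → ℝ) :=
  convexHull ℝ ({0} ∪ {x | ∃ i : Fin n, (i : ℕ) < d ∧ x = (Pi.single i 1 : Fin n → ℝ)})

/-- The simplex `T̂^{d-1} = [o, e₁, e₃, …, e_d]` (omitting `e₂`). -/
def stdSimplexHat (n d : ℕ) : Set (Fin n → ℝ) :=
  convexHull ℝ
    ({0} ∪ {x | ∃ i : Fin n, (i : ℕ) < d ∧ (i : ℕ) ≠ 1 ∧ x = (Pi.single i 1 : Fin n → ℝ)})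

/-!
Up to the factors `λ^{-1/n}` and `(1-λ)^{-1/n}`, which cancel against the dilations by
`λ^{1/n}` and `(1-λ)^{1/n}`, the maps `φ₃` and `φ₄` are shears `σ` fixing `e_i` for `i ≠ k` and
sending `e_k` to `(1 - a) e_k + a e_l`. Such a shear preserves the coordinate sum and maps the
nonnegative orthant onto the wedge `{x ≥ 0 | a x_k ≤ (1 - a) x_l}`, the face `{y_l = 0}` going
to its bounding hyperplane. Cutting with `{∑ x ≤ s}` gives the three identities.
-/

variable {ι : Type*} [DecidableEq ι]

theorem convexHull_zero_union_single [Fintype ι] (p : ι → Prop) :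
    convexHull ℝ ({0} ∪ {x | ∃ i, p i ∧ x = (Pi.single i 1 : ι → ℝ)}) =
      {x | (∀ i, 0 ≤ x i) ∧ (∀ i, ¬ p i → x i = 0) ∧ ∑ i, x i ≤ 1} := by
  classical
  refine subset_antisymm (convexHull_min ?_ ?_) ?_
  · rintro _ (rfl | ⟨i, hi, rfl⟩)
    · simp
    · refine ⟨fun j => ?_, fun j hj => ?_, by simp⟩
      · simp [Pi.single_apply]; positivity
      · simp [show j ≠ i by rintro rfl; exact hj hi]
  · rintro x ⟨hx0, hxp, hx1⟩ y ⟨hy0, hyp, hy1⟩ a b ha hb hab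
    refine ⟨fun i => ?_, fun i hi => by simp [hxp i hi, hyp i hi], ?_⟩
    · exact add_nonneg (mul_nonneg ha (hx0 i)) (mul_nonneg hb (hy0 i))
    · simp only [Pi.add_apply, Pi.smul_apply, smul_eq_mul, Finset.sum_add_distrib,
        ← Finset.mul_sum]
      nlinarith
  · rintro x ⟨hx0, hxp, hx1⟩
    have hmem := (convex_convexHull ℝ
        ({0} ∪ {x | ∃ i, p i ∧ x = (Pi.single i 1 : ι → ℝ)})).sum_mem
      (t := Finset.univ) (w := fun o : Option ι => o.elim (1 - ∑ i, x i) x)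
      (z := fun o => o.elim 0 fun i => if p i then Pi.single i 1 else 0)
      (fun o _ => by cases o <;> simp [hx1, hx0])
      (by simp [Fintype.sum_option])
      (fun o _ => by
        refine subset_convexHull ℝ _ ?_
        rcases o with _ | i
        · simp
        · by_cases hi : p i
          · exact Or.inr ⟨i, hi, if_pos hi⟩
          · simp [hi])
    convert hmem using 1
    simp only [Fintype.sum_option, Option.elim, smul_zero, zero_add]
    conv_lhs => rw [← Finset.univ_sum_single x]
    refine Finset.sum_congr rfl fun i _ => ?_
    by_cases hi : p i
    · simp [hi, ← Pi.single_smul']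
    · simp [hi, hxp i hi]

theorem smul_convexHull_zero_union_single [Fintype ι] (p : ι → Prop) {r : ℝ} (hr : 0 < r) :
    r • convexHull ℝ ({0} ∪ {x | ∃ i, p i ∧ x = (Pi.single i 1 : ι → ℝ)}) =
      {x | (∀ i, 0 ≤ x i) ∧ (∀ i, ¬ p i → x i = 0) ∧ ∑ i, x i ≤ r} := by
  ext x
  rw [convexHull_zero_union_single, Set.mem_smul_set_iff_inv_smul_mem₀ hr.ne']
  simp only [Set.mem_ofPred_eq, Pi.smul_apply, smul_eq_mul, ← Finset.mul_sum,
    mul_nonneg_iff_of_pos_left (inv_pos.2 hr), mul_eq_zero, inv_eq_zero, hr.ne', false_or,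
    inv_mul_le_iff₀ hr, mul_one]

def shear (k l : ι) (a : ℝ) : (ι → ℝ) →ₗ[ℝ] ι → ℝ :=
  LinearMap.id + (LinearMap.proj k).smulRight (a • (Pi.single l 1 - Pi.single k 1))

section shear

variable {k l : ι} (a : ℝ)

theorem shear_apply (hkl : k ≠ l) (y : ι → ℝ) (i : ι) :
    shear k l a y i =
      if i = k then (1 - a) * y k else if i = l then y l + a * y k else y i := by
  simp only [shear, LinearMap.add_apply, LinearMap.id_apply, LinearMap.smulRight_apply,
    LinearMap.coe_proj, Function.eval, Pi.add_apply, Pi.smul_apply, Pi.sub_apply,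
    Pi.single_apply, smul_eq_mul]
  split_ifs <;> simp_all <;> ring

theorem sum_shear [Fintype ι] (y : ι → ℝ) : ∑ i, shear k l a y i = ∑ i, y i := by
  simp [shear, Finset.sum_add_distrib, ← Finset.mul_sum, Finset.sum_sub_distrib]

theorem eq_smul_shear [Finite ι] (hkl : k ≠ l) {c : ℝ} (φ : (ι → ℝ) →ₗ[ℝ] ι → ℝ)
    (hk : φ (Pi.single k 1) = c • ((1 - a) • Pi.single k 1 + a • Pi.single l 1))
    (hi : ∀ i, i ≠ k → φ (Pi.single i 1) = c • Pi.single i 1) :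
    φ = c • shear k l a := by
  refine (Pi.basisFun ℝ ι).ext fun i => ?_
  simp only [Pi.basisFun_apply, LinearMap.smul_apply]
  by_cases hik : i = k
  · subst hik
    rw [hk]
    congr 1
    ext j
    simp only [shear_apply a hkl, Pi.add_apply, Pi.smul_apply, Pi.single_apply, smul_eq_mul]
    split_ifs <;> simp_all
  · rw [hi i hik]
    congr 1
    ext j
    simp only [shear_apply a hkl, Pi.single_apply]
    split_ifs <;> simp_all

variable {a}

theorem shear_image_nonneg (hkl : k ≠ l) (ha₀ : 0 ≤ a) (ha₁ : a < 1) :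
    shear k l a '' {y | ∀ i, 0 ≤ y i} = {x | (∀ i, 0 ≤ x i) ∧ a * x k ≤ (1 - a) * x l} := by
  have h1a : 0 < 1 - a := by linarith
  ext x
  constructor
  · rintro ⟨y, hy, rfl⟩
    refine ⟨fun i => ?_, ?_⟩
    · rw [shear_apply a hkl]
      split_ifs
      · exact mul_nonneg h1a.le (hy k)
      · exact add_nonneg (hy l) (mul_nonneg ha₀ (hy k))
      · exact hy i
    · simp only [shear_apply a hkl, hkl.symm, ↓reduceIte]
      nlinarith [mul_nonneg h1a.le (hy l)]
  · rintro ⟨hx, hxa⟩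
    refine ⟨shear k l (-(a / (1 - a))) x, fun i => ?_, ?_⟩
    · rw [shear_apply _ hkl]
      split_ifs
      · exact mul_nonneg (by rw [sub_neg_eq_add]; positivity) (hx k)
      · rw [neg_mul, ← sub_eq_add_neg, sub_nonneg, div_mul_eq_mul_div, div_le_iff₀ h1a]
        linarith
      · exact hx i
    · ext i
      simp only [shear_apply _ hkl, hkl.symm, ↓reduceIte]
      split_ifs with hik hil
      · subst hik
        field_simp
        ring
      · subst hil
        field_simp
        ring
      · rfl

variable [Fintype ι]

theorem shear_image_nonneg_sum_le (hkl : k ≠ l) (ha₀ : 0 ≤ a) (ha₁ : a < 1) (r : ℝ) :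
    shear k l a '' {y | (∀ i, 0 ≤ y i) ∧ ∑ i, y i ≤ r} =
      {x | (∀ i, 0 ≤ x i) ∧ ∑ i, x i ≤ r} ∩ {x | a * x k ≤ (1 - a) * x l} := by
  have hpre : {y : ι → ℝ | (∀ i, 0 ≤ y i) ∧ ∑ i, y i ≤ r} =
      {y | ∀ i, 0 ≤ y i} ∩ shear k l a ⁻¹' {x | ∑ i, x i ≤ r} := by
    ext y
    simp [sum_shear]
  rw [hpre, Set.image_inter_preimage, shear_image_nonneg hkl ha₀ ha₁]
  ext x
  simp only [Set.mem_inter_iff, Set.mem_ofPred_eq, Set.mem_preimage, sum_shear]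
  tauto

theorem shear_image_nonneg_eq_zero_sum_le (hkl : k ≠ l) (ha₀ : 0 ≤ a) (ha₁ : a < 1) (r : ℝ) :
    shear k l a '' {y | (∀ i, 0 ≤ y i) ∧ y l = 0 ∧ ∑ i, y i ≤ r} =
      {x | (∀ i, 0 ≤ x i) ∧ ∑ i, x i ≤ r} ∩ {x | a * x k = (1 - a) * x l} := by
  have h1a : 1 - a ≠ 0 := by linarith
  have hpre : {y : ι → ℝ | (∀ i, 0 ≤ y i) ∧ y l = 0 ∧ ∑ i, y i ≤ r} =
      {y | ∀ i, 0 ≤ y i} ∩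
        shear k l a ⁻¹' ({x | ∑ i, x i ≤ r} ∩ {x | a * x k = (1 - a) * x l}) := by
    ext y
    have hl : a * shear k l a y k = (1 - a) * shear k l a y l ↔ y l = 0 := by
      simp only [shear_apply a hkl, hkl.symm, ↓reduceIte]
      constructor
      · intro h
        exact (mul_eq_zero.1 (by linear_combination -h)).resolve_left h1a
      · intro h
        rw [h]
        ring
    simp only [Set.mem_ofPred_eq, Set.mem_inter_iff, Set.mem_preimage, sum_shear, hl]
    tauto
  rw [hpre, Set.image_inter_preimage, shear_image_nonneg hkl ha₀ ha₁]
  ext x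
  simp only [Set.mem_inter_iff, Set.mem_ofPred_eq]
  constructor
  · rintro ⟨⟨hx, -⟩, hs, he⟩
    exact ⟨⟨hx, hs⟩, he⟩
  · rintro ⟨⟨hx, hs⟩, he⟩
    exact ⟨⟨hx, he.le⟩, hs, he⟩

end shear

theorem smul_stdSimplex' {n : ℕ} {r : ℝ} (hr : 0 < r) :
    r • stdSimplex' n n = {x | (∀ i, 0 ≤ x i) ∧ ∑ i, x i ≤ r} := by
  rw [stdSimplex', smul_convexHull_zero_union_single _ hr]
  simp

theorem smul_stdSimplexHat {n : ℕ} (hn : 1 < n) {r : ℝ} (hr : 0 < r) :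
    r • stdSimplexHat n n = {x | (∀ i, 0 ≤ x i) ∧ x ⟨1, hn⟩ = 0 ∧ ∑ i, x i ≤ r} := by
  simp_rw [stdSimplexHat, ← and_assoc, smul_convexHull_zero_union_single _ hr]
  ext x
  have h1 : (∀ i : Fin n, (i : ℕ) = 1 → x i = 0) ↔ x ⟨1, hn⟩ = 0 :=
    ⟨fun h => h _ rfl, fun h i hi => by rwa [show i = ⟨1, hn⟩ from Fin.ext hi]⟩
  simp [h1, and_assoc]

theorem inv_smul_image_mul_smul {E : Type*} [AddCommGroup E] [Module ℝ E] (f : E →ₗ[ℝ] E)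
    {c : ℝ} (hc : c ≠ 0) (s : ℝ) (A : Set E) :
    (c⁻¹ • f) '' ((c * s) • A) = f '' (s • A) := by
  have hcomp : ⇑(c⁻¹ • f) = (c⁻¹ • ·) ∘ f := rfl
  rw [hcomp, Set.image_comp, Set.image_smul, ← image_smul_set, smul_smul, inv_mul_cancel_left₀ hc]

/-- The dissection of `sTⁿ` by the hyperplane `H_λ`: with `φ₃, φ₄ ∈ SL(n)` as stated,
`sTⁿ ∩ H_λ⁻ = φ₃(λ^{1/n}sTⁿ)`, `sTⁿ ∩ H_λ⁺ = φ₄((1-λ)^{1/n}sTⁿ)` and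
`sTⁿ ∩ H_λ = φ₃(λ^{1/n}s T̂^{n-1})`. -/
theorem simplex_dissection_top {n : ℕ} (hn : 2 ≤ n)
    (lam : ℝ) (hlam : 0 < lam) (hlam1 : lam < 1) (s : ℝ) (hs : 0 < s)
    (φ₃ φ₄ : (Fin n → ℝ) →ₗ[ℝ] (Fin n → ℝ))
    (hφ₃₁ : φ₃ (Pi.single (⟨0, by omega⟩ : Fin n) 1 : Fin n → ℝ)
      = lam ^ (-(1 : ℝ) / n) •
          (lam • (Pi.single (⟨0, by omega⟩ : Fin n) 1 : Fin n → ℝ)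
            + (1 - lam) • (Pi.single (⟨1, by omega⟩ : Fin n) 1 : Fin n → ℝ)))
    (hφ₃i : ∀ i : Fin n, 1 ≤ (i : ℕ) →
      φ₃ (Pi.single i 1 : Fin n → ℝ) = lam ^ (-(1 : ℝ) / n) • (Pi.single i 1 : Fin n → ℝ))
    (hφ₄₂ : φ₄ (Pi.single (⟨1, by omega⟩ : Fin n) 1 : Fin n → ℝ)
      = (1 - lam) ^ (-(1 : ℝ) / n) •
          (lam • (Pi.single (⟨0, by omega⟩ : Fin n) 1 : Fin n → ℝ)
            + (1 - lam) • (Pi.single (⟨1, by omega⟩ : Fin n) 1 : Fin n → ℝ)))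
    (hφ₄i : ∀ i : Fin n, (i : ℕ) ≠ 1 →
      φ₄ (Pi.single i 1 : Fin n → ℝ)
        = (1 - lam) ^ (-(1 : ℝ) / n) • (Pi.single i 1 : Fin n → ℝ)) :
    ((s • stdSimplex' n n : Set (Fin n → ℝ)) ∩
        {x | (1 - lam) * x ⟨0, by omega⟩ - lam * x ⟨1, by omega⟩ ≤ 0})
      = φ₃ '' ((lam ^ ((1 : ℝ) / n) * s) • stdSimplex' n n : Set (Fin n → ℝ)) ∧
    ((s • stdSimplex' n n : Set (Fin n → ℝ)) ∩
        {x | 0 ≤ (1 - lam) * x ⟨0, by omega⟩ - lam * x ⟨1, by omega⟩})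
      = φ₄ '' (((1 - lam) ^ ((1 : ℝ) / n) * s) • stdSimplex' n n : Set (Fin n → ℝ)) ∧
    ((s • stdSimplex' n n : Set (Fin n → ℝ)) ∩
        {x | (1 - lam) * x ⟨0, by omega⟩ - lam * x ⟨1, by omega⟩ = 0})
      = φ₃ '' ((lam ^ ((1 : ℝ) / n) * s) • stdSimplexHat n n : Set (Fin n → ℝ)) := by
  have h1l : 0 < 1 - lam := by linarith
  set i0 : Fin n := ⟨0, by omega⟩
  set i1 : Fin n := ⟨1, by omega⟩
  have hne : i0 ≠ i1 := by simp [i0, i1, Fin.ext_iff]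
  have hpow (t : ℝ) (ht : 0 < t) : t ^ (-(1 : ℝ) / n) = (t ^ ((1 : ℝ) / n))⁻¹ := by
    rw [neg_div, Real.rpow_neg ht.le]
  have hφ₃ : φ₃ = (lam ^ ((1 : ℝ) / n))⁻¹ • shear i0 i1 (1 - lam) := by
    refine eq_smul_shear _ hne φ₃ ?_ fun i hi => ?_
    · rw [hφ₃₁, sub_sub_cancel, hpow lam hlam]
    · exact (hpow lam hlam) ▸ hφ₃i i (Nat.one_le_iff_ne_zero.2 fun h => hi (Fin.ext h))
  have hφ₄ : φ₄ = ((1 - lam) ^ ((1 : ℝ) / n))⁻¹ • shear i1 i0 lam := by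
    refine eq_smul_shear _ hne.symm φ₄ ?_ fun i hi => ?_
    · rw [hφ₄₂, add_comm, hpow _ h1l]
    · exact (hpow _ h1l) ▸ hφ₄i i fun h => hi (Fin.ext h)
  have hc₃ : lam ^ ((1 : ℝ) / n) ≠ 0 := (Real.rpow_pos_of_pos hlam _).ne'
  have hc₄ : (1 - lam) ^ ((1 : ℝ) / n) ≠ 0 := (Real.rpow_pos_of_pos h1l _).ne'
  rw [hφ₃, hφ₄, inv_smul_image_mul_smul _ hc₃, inv_smul_image_mul_smul _ hc₄,
    inv_smul_image_mul_smul _ hc₃, smul_stdSimplex' hs, smul_stdSimplexHat (by omega) hs,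
    shear_image_nonneg_sum_le hne h1l.le (by linarith),
    shear_image_nonneg_sum_le hne.symm hlam.le hlam1,
    shear_image_nonneg_eq_zero_sum_le hne h1l.le (by linarith)]
  simp only [sub_sub_cancel, sub_nonpos, sub_nonneg, sub_eq_zero, and_self]
end

section
/- Let n ≥ 3 and let Z : ℝⁿ-simplices-with-vertex-at-origin → C(ℝⁿ \ {o}) be SL(n) contravariant, i.e., Z(φT)(x) = Z(T)(φ⁻¹x) for all φ ∈ SL(n). If T is a simplex with one vertex at the origin, dim T ≤ n − 2, then Z(T) is constant on ℝⁿ \ {o}: Z(T)(x) = Z(T)(e_n) for all x ≠ o. -/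
/-!
The pointwise stabiliser in `SL(n)` of `V = span T` acts transitively on `ℝⁿ \ V` once
`codim V ≥ 2`: a transvection `x ↦ x + η x • (b - a)`, with `η` vanishing on `V` and equal to `1`
at `a` and `b`, fixes `V` and sends `a` to `b` whenever `b ∉ V + ℝa`, and any two points off `V`
are joined through a third point avoiding both `V + ℝa` and `V + ℝb`. Contravariance makes `Z T`
invariant under this stabiliser (it fixes `T`), hence constant on `ℝⁿ \ V`, which is dense,
so continuity spreads the constant to all of `ℝⁿ \ {o}`.
-/

/-- A simplex in `ℝⁿ` with one vertex at the origin (possibly lower-dimensional,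
possibly `{o}`). -/
def IsOriginSimplex {n : ℕ} (T : Set (Fin n → ℝ)) : Prop :=
  ∃ S : Finset (Fin n → ℝ),
    AffineIndependent ℝ
      (Subtype.val : (insert (0 : Fin n → ℝ) (S : Set (Fin n → ℝ)) : Set (Fin n → ℝ))
        → (Fin n → ℝ)) ∧
    T = convexHull ℝ (insert (0 : Fin n → ℝ) (S : Set (Fin n → ℝ)))

open Module Submodule Matrix MatrixGroups

section Dual

variable {K E : Type*} [Field K] [AddCommGroup E] [Module K E]

theorem Submodule.exists_le_ker_apply_eq_one {p : Submodule K E} {v : E} (hv : v ∉ p) :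
    ∃ f : Dual K E, p ≤ LinearMap.ker f ∧ f v = 1 := by
  obtain ⟨f, hfv, hpf⟩ := exists_le_ker_of_notMem hv
  exact ⟨(f v)⁻¹ • f, fun x hx => by simp [LinearMap.mem_ker.1 (hpf hx)], by simp [hfv]⟩

theorem Submodule.exists_le_ker_apply_eq_one_apply_eq_one {V : Submodule K E} {a b : E}
    (ha : a ∉ V) (hb : b ∉ V ⊔ K ∙ a) :
    ∃ η : Dual K E, V ≤ LinearMap.ker η ∧ η a = 1 ∧ η b = 1 := by
  obtain ⟨f, hfV, hfa⟩ := exists_le_ker_apply_eq_one ha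
  obtain ⟨g, hgVa, hgb⟩ := exists_le_ker_apply_eq_one hb
  have hga : g a = 0 := hgVa (mem_sup_right (mem_span_singleton_self a))
  refine ⟨f + (1 - f b) • g, fun v hv => ?_, by simp [hfa, hga], by simp [hgb]⟩
  simp [LinearMap.mem_ker.1 (hfV hv), LinearMap.mem_ker.1 (hgVa (mem_sup_left hv))]

theorem Submodule.sup_span_singleton_ne_top [FiniteDimensional K E] {V : Submodule K E}
    (hV : finrank K V + 2 ≤ finrank K E) (w : E) : V ⊔ K ∙ w ≠ ⊤ := by
  intro h
  have hw : finrank K (K ∙ w) ≤ 1 := by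
    simpa using finrank_span_le_card ({w} : Set E)
  have := finrank_add_le_finrank_add_finrank V (K ∙ w)
  rw [h, finrank_top] at this
  omega

end Dual

theorem Submodule.exists_notMem_notMem_of_ne_top {R M : Type*} [Ring R] [AddCommGroup M]
    [Module R M] {p q : Submodule R M} (hp : p ≠ ⊤) (hq : q ≠ ⊤) : ∃ z, z ∉ p ∧ z ∉ q := by
  obtain ⟨a, -, ha⟩ := SetLike.exists_of_lt hp.lt_top
  obtain ⟨b, -, hb⟩ := SetLike.exists_of_lt hq.lt_top
  by_cases haq : a ∈ q
  · by_cases hbp : b ∈ p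
    · exact ⟨a + b, fun h => ha ((p.add_mem_iff_left hbp).1 h),
        fun h => hb ((q.add_mem_iff_right haq).1 h)⟩
    · exact ⟨b, hbp, hb⟩
  · exact ⟨a, ha, haq⟩

section SpecialLinearGroup

variable {K : Type*} [Field K] {n : ℕ} {V : Submodule K (Fin n → K)} {a b : Fin n → K}

theorem exists_mem_fixingSubgroup_smul_eq_of_notMem_sup (ha : a ∉ V) (hb : b ∉ V ⊔ K ∙ a) :
    ∃ φ ∈ fixingSubgroup SL(n, K) (V : Set (Fin n → K)), φ • a = b := by
  obtain ⟨η, hηV, hηa, hηb⟩ := exists_le_ker_apply_eq_one_apply_eq_one ha hb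
  have hdet : (LinearMap.toMatrix' (LinearMap.transvection η (b - a))).det = 1 := by
    simp [LinearMap.det_toMatrix', hηa, hηb]
  refine ⟨⟨_, hdet⟩, (mem_fixingSubgroup_iff _).2 fun v hv => ?_, ?_⟩
  · change LinearMap.toMatrix' _ *ᵥ v = v
    simp [LinearMap.toMatrix'_mulVec, LinearMap.transvection.apply, LinearMap.mem_ker.1 (hηV hv)]
  · change LinearMap.toMatrix' _ *ᵥ a = b
    simp [LinearMap.toMatrix'_mulVec, LinearMap.transvection.apply, hηa]

theorem exists_mem_fixingSubgroup_smul_eq (hV : finrank K V + 2 ≤ n) (ha : a ∉ V) (hb : b ∉ V) :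
    ∃ φ ∈ fixingSubgroup SL(n, K) (V : Set (Fin n → K)), φ • a = b := by
  replace hV : finrank K V + 2 ≤ finrank K (Fin n → K) := by rwa [finrank_fin_fun]
  obtain ⟨z, hza, hzb⟩ := exists_notMem_notMem_of_ne_top
    (sup_span_singleton_ne_top hV a) (sup_span_singleton_ne_top hV b)
  obtain ⟨φ, hφ, hφa⟩ := exists_mem_fixingSubgroup_smul_eq_of_notMem_sup ha hza
  obtain ⟨ψ, hψ, hψb⟩ := exists_mem_fixingSubgroup_smul_eq_of_notMem_sup hb hzb
  exact ⟨ψ⁻¹ * φ, mul_mem (inv_mem hψ) hφ, by rw [mul_smul, hφa, ← hψb, inv_smul_smul]⟩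

end SpecialLinearGroup

section Topology

variable {E : Type*} [TopologicalSpace E] [AddCommGroup E] [Module ℝ E] [ContinuousAdd E]
  [ContinuousSMul ℝ E] {V : Submodule ℝ E}

theorem Submodule.dense_compl (hV : V ≠ ⊤) : Dense (V : Set E)ᶜ := by
  rw [← interior_eq_empty_iff_dense_compl, ← Set.not_nonempty_iff_eq_empty]
  exact fun h => hV (V.eq_top_of_nonempty_interior' h)

theorem Submodule.eq_of_continuousOn_of_forall_notMem_eq {Y : Type*} [TopologicalSpace Y]
    [T2Space Y] (hV : V ≠ ⊤) {f : E → Y} {c : Y} (hf : ContinuousOn f {x | x ≠ 0})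
    (hc : ∀ a ∉ V, f a = c) : ∀ x ≠ 0, f x = c :=
  Set.EqOn.of_subset_closure (s := (V : Set E)ᶜ) hc hf continuousOn_const
    (fun _ ha h => ha (h ▸ V.zero_mem)) ((dense_compl hV).closure_eq ▸ Set.subset_univ _)

end Topology

/-- If `Z` is `SL(n)` contravariant on origin simplices with values in `C(ℝⁿ \ {o})`,
and `dim T ≤ n - 2`, then `Z T` is constant on `ℝⁿ \ {o}`: `Z T x = Z T eₙ`. -/
theorem contravariant_low_dim_constant {n : ℕ} (hn : 3 ≤ n)
    (Z : Set (Fin n → ℝ) → (Fin n → ℝ) → ℝ)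
    (hcont : ∀ T : Set (Fin n → ℝ), IsOriginSimplex T →
      ContinuousOn (Z T) {x : Fin n → ℝ | x ≠ 0})
    (hcontra : ∀ (φ : Matrix.SpecialLinearGroup (Fin n) ℝ) (T : Set (Fin n → ℝ)),
      IsOriginSimplex T → ∀ x : Fin n → ℝ, x ≠ 0 →
        Z ((fun y => (φ : Matrix (Fin n) (Fin n) ℝ).mulVec y) '' T) x
          = Z T ((↑(φ⁻¹) : Matrix (Fin n) (Fin n) ℝ).mulVec x)) :
    ∀ T : Set (Fin n → ℝ), IsOriginSimplex T →
      Module.finrank ℝ (Submodule.span ℝ T) ≤ n - 2 →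
      ∀ x : Fin n → ℝ, x ≠ 0 →
        Z T x = Z T (Pi.single (⟨n - 1, by omega⟩ : Fin n) 1 : Fin n → ℝ) := by
  intro T hT hdim x hx
  set V := span ℝ T
  have hcodim : finrank ℝ V + 2 ≤ n := by omega
  have hV : V ≠ ⊤ := fun h => by
    rw [h, finrank_top, finrank_fin_fun] at hcodim
    omega
  have hinv : ∀ φ ∈ fixingSubgroup SL(n, ℝ) (V : Set (Fin n → ℝ)), ∀ y ≠ 0,
      Z T (φ • y) = Z T y := by
    intro φ hφ y hy
    have hfix : (fun y => (↑φ⁻¹ : Matrix (Fin n) (Fin n) ℝ) *ᵥ y) '' T = T :=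
      (Set.image_congr fun v hv => (mem_fixingSubgroup_iff _).1 (inv_mem hφ) v
        (subset_span hv)).trans (Set.image_id T)
    have h := hcontra φ⁻¹ T hT y hy
    rw [hfix, inv_inv] at h
    exact h.symm
  obtain ⟨x₀, -, hx₀⟩ := SetLike.exists_of_lt hV.lt_top
  have hoff : ∀ a ∉ V, Z T a = Z T x₀ := fun a ha => by
    obtain ⟨φ, hφ, rfl⟩ := exists_mem_fixingSubgroup_smul_eq hcodim hx₀ ha
    exact hinv φ hφ x₀ fun h => hx₀ (h ▸ V.zero_mem)
  have hconst := eq_of_continuousOn_of_forall_notMem_eq hV (hcont T hT) hoff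
  exact (hconst x hx).trans (hconst _ (by simp)).symm
end
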